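/- Suppose (x*, u*) is a local minimizer of the continuous optimal control problem (P) with costate λ*, assumptions (A2)–(A3) hold, and for each N ≥ 2 the Radau quadrature rule of order N satisfies (P1). Then there exists a constant c, independent of N, such that for every N and every right-hand side y, the solution (X, U) of the quadratic program (QP) satisfies ‖X‖_ω ≤ c ‖y‖_∞ and ‖U‖_ω ≤ c ‖y‖_∞. -/

import Mathlib

open Polynomial Matrix Set

noncomputable section

/-- Euclidean norm of a finite real vector. -/
def enorm' {k : ℕ} (v : Fin k → ℝ) : ℝ := Real.sqrt (∑ i, (v i) ^ 2)

/-- Gradient of a scalar function on `ℝ^k` (vector of partial derivatives). -/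
def pgrad {k : ℕ} (g : (Fin k → ℝ) → ℝ) (x : Fin k → ℝ) : Fin k → ℝ :=
  fun i => fderiv ℝ g x (Pi.single i 1)

/-- The Hamiltonian `H(x,u,λ) = λᵀ f(x,u)`. -/
def ham {n m : ℕ} (f : (Fin n → ℝ) → (Fin m → ℝ) → Fin n → ℝ)
    (x : Fin n → ℝ) (u : Fin m → ℝ) (lam : Fin n → ℝ) : ℝ :=
  ∑ l, lam l * f x u l

/-- `∇_x H`. -/
def gradxH {n m : ℕ} (f : (Fin n → ℝ) → (Fin m → ℝ) → Fin n → ℝ)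
    (x : Fin n → ℝ) (u : Fin m → ℝ) (lam : Fin n → ℝ) : Fin n → ℝ :=
  pgrad (fun x' => ham f x' u lam) x

/-- `∇_u H`. -/
def graduH {n m : ℕ} (f : (Fin n → ℝ) → (Fin m → ℝ) → Fin n → ℝ)
    (x : Fin n → ℝ) (u : Fin m → ℝ) (lam : Fin n → ℝ) : Fin m → ℝ :=
  pgrad (fun u' => ham f x u' lam) u

/-- Jacobian `∇_x f` (an `n×n` matrix whose `k`-th row is `(∇_x f_k)ᵀ`). -/
def jacX {n m : ℕ} (f : (Fin n → ℝ) → (Fin m → ℝ) → Fin n → ℝ)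
    (x : Fin n → ℝ) (u : Fin m → ℝ) : Matrix (Fin n) (Fin n) ℝ :=
  fun k l => fderiv ℝ (fun x' => f x' u k) x (Pi.single l 1)

/-- Jacobian `∇_u f`. -/
def jacU {n m : ℕ} (f : (Fin n → ℝ) → (Fin m → ℝ) → Fin n → ℝ)
    (x : Fin n → ℝ) (u : Fin m → ℝ) : Matrix (Fin n) (Fin m) ℝ :=
  fun k l => fderiv ℝ (fun u' => f x u' k) u (Pi.single l 1)

/-- Hessian `∇_{xx} H`. -/
def hessXX {n m : ℕ} (f : (Fin n → ℝ) → (Fin m → ℝ) → Fin n → ℝ)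
    (x : Fin n → ℝ) (u : Fin m → ℝ) (lam : Fin n → ℝ) : Matrix (Fin n) (Fin n) ℝ :=
  fun k l => fderiv ℝ (fun x' => gradxH f x' u lam l) x (Pi.single k 1)

/-- Hessian `∇_{xu} H` (`n×m`). -/
def hessXU {n m : ℕ} (f : (Fin n → ℝ) → (Fin m → ℝ) → Fin n → ℝ)
    (x : Fin n → ℝ) (u : Fin m → ℝ) (lam : Fin n → ℝ) : Matrix (Fin n) (Fin m) ℝ :=
  fun k l => fderiv ℝ (fun u' => gradxH f x u' lam k) u (Pi.single l 1)

/-- Hessian `∇_{uu} H`. -/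
def hessUU {n m : ℕ} (f : (Fin n → ℝ) → (Fin m → ℝ) → Fin n → ℝ)
    (x : Fin n → ℝ) (u : Fin m → ℝ) (lam : Fin n → ℝ) : Matrix (Fin m) (Fin m) ℝ :=
  fun k l => fderiv ℝ (fun u' => graduH f x u' lam k) u (Pi.single l 1)

/-- Hessian `∇² C`. -/
def hessC {n : ℕ} (C : (Fin n → ℝ) → ℝ) (x : Fin n → ℝ) : Matrix (Fin n) (Fin n) ℝ :=
  fun k l => fderiv ℝ (fun x' => pgrad C x' l) x (Pi.single k 1)

/-- The differentiation matrix for nodes `σ 0, …, σ N`: `D i j = L̇_j(σ (i+1))`. -/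
def diffMat (N : ℕ) (σ : Fin (N + 1) → ℝ) : Matrix (Fin N) (Fin (N + 1)) ℝ :=
  fun i j => (derivative (Lagrange.basis Finset.univ σ j)).eval (σ i.succ)

/-- The square submatrix of `D` formed by columns `1` through `N`. -/
def diffMat1N (N : ℕ) (σ : Fin (N + 1) → ℝ) : Matrix (Fin N) (Fin N) ℝ :=
  fun i j => diffMat N σ i j.succ

/-- The matrix `D‡` with entries `D‡_{ij} = -(ω_j/ω_i) D_{ji}`. -/
def ddagMat (N : ℕ) (σ : Fin (N + 1) → ℝ) (ω : Fin N → ℝ) :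
    Matrix (Fin N) (Fin N) ℝ :=
  fun i j => -(ω j / ω i) * diffMat N σ j i.succ

/-- `(τ; ω)` is a Radau quadrature rule of order `N`: nodes
`-1 < τ_1 < … < τ_N = 1`, positive weights, and the quadrature is exact for
polynomials of degree at most `2N-2`. -/
def IsRadauRule (N : ℕ) (τ ω : Fin N → ℝ) : Prop :=
  StrictMono τ ∧ (∀ i, -1 < τ i) ∧ (∀ i, τ i ≤ 1) ∧ (∃ i, τ i = 1) ∧
  (∀ i, 0 < ω i) ∧
  ∀ q : Polynomial ℝ, q.degree ≤ (2 * N - 2 : ℕ) →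
    ∫ t in (-1:ℝ)..1, q.eval t = ∑ i, ω i * q.eval (τ i)

/-- The linearized KKT map `∇T*` of the Radau discretization, linearized at
`(x*, u*, λ*)` evaluated along the collocation points. -/
def gradTstar (n m N : ℕ) (hN : 0 < N)
    (f : (Fin n → ℝ) → (Fin m → ℝ) → Fin n → ℝ) (C : (Fin n → ℝ) → ℝ)
    (xs : ℝ → Fin n → ℝ) (us : ℝ → Fin m → ℝ) (lams : ℝ → Fin n → ℝ)
    (τ ω : Fin N → ℝ) :
    ((Fin (N + 1) → Fin n → ℝ) × (Fin N → Fin m → ℝ) × (Fin (N + 1) → Fin n → ℝ)) →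
    ((Fin N → Fin n → ℝ) × (Fin n → ℝ) × (Fin n → ℝ) ×
      (Fin (N - 1) → Fin n → ℝ) × (Fin n → ℝ) × (Fin N → Fin m → ℝ)) :=
  fun XUL =>
    let X := XUL.1; let U := XUL.2.1; let Λ := XUL.2.2
    let σ : Fin (N + 1) → ℝ := Fin.cons (-1) τ
    let A : Fin N → Matrix (Fin n) (Fin n) ℝ := fun i => jacX f (xs (τ i)) (us (τ i))
    let B : Fin N → Matrix (Fin n) (Fin m) ℝ := fun i => jacU f (xs (τ i)) (us (τ i))
    let Q : Fin N → Matrix (Fin n) (Fin n) ℝ :=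
      fun i => hessXX f (xs (τ i)) (us (τ i)) (lams (τ i))
    let S : Fin N → Matrix (Fin n) (Fin m) ℝ :=
      fun i => hessXU f (xs (τ i)) (us (τ i)) (lams (τ i))
    let R : Fin N → Matrix (Fin m) (Fin m) ℝ :=
      fun i => hessUU f (xs (τ i)) (us (τ i)) (lams (τ i))
    let T : Matrix (Fin n) (Fin n) ℝ := hessC C (xs 1)
    let lastN : Fin N := ⟨N - 1, Nat.sub_lt hN one_pos⟩
    ( -- (1)
      fun i => (∑ j, diffMat N σ i j • X j) - (A i).mulVec (X i.succ)
        - (B i).mulVec (U i),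
      -- (2)
      X 0,
      -- (3)
      Λ 0 - T.mulVec (X (Fin.last N)) -
        ∑ i : Fin N, ω i •
          ((A i)ᵀ.mulVec (Λ i.succ) + (Q i).mulVec (X i.succ) + (S i).mulVec (U i)),
      -- (4)
      fun i : Fin (N - 1) =>
        let i' : Fin N := Fin.castLE (Nat.sub_le N 1) i
        (∑ j, ddagMat N σ ω i' j • Λ j.succ) + (A i')ᵀ.mulVec (Λ i'.succ)
          + (Q i').mulVec (X i'.succ) + (S i').mulVec (U i'),
      -- (5)
      (∑ j, ddagMat N σ ω lastN j • Λ j.succ) + (A lastN)ᵀ.mulVec (Λ lastN.succ)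
        + (Q lastN).mulVec (X lastN.succ) + (S lastN).mulVec (U lastN)
        + (1 / ω lastN) • T.mulVec (X (Fin.last N)),
      -- (6)
      fun i => (S i)ᵀ.mulVec (X i.succ) + (R i).mulVec (U i)
        + (B i)ᵀ.mulVec (Λ i.succ) )


/-- Feasibility in the quadratic program (QP): the linearized collocated
dynamics with inhomogeneity `y₁` and initial condition `X₀ = y₂`. -/
def qpFeasible (n m N : ℕ)
    (f : (Fin n → ℝ) → (Fin m → ℝ) → Fin n → ℝ)
    (xs : ℝ → Fin n → ℝ) (us : ℝ → Fin m → ℝ)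
    (τ : Fin N → ℝ)
    (y1 : Fin N → Fin n → ℝ) (y2 : Fin n → ℝ)
    (X : Fin (N + 1) → Fin n → ℝ) (U : Fin N → Fin m → ℝ) : Prop :=
  (∀ i : Fin N,
    (∑ j, diffMat N (Fin.cons (-1) τ) i j • X j) =
      (jacX f (xs (τ i)) (us (τ i))).mulVec (X i.succ) +
      (jacU f (xs (τ i)) (us (τ i))).mulVec (U i) + y1 i) ∧
  X 0 = y2

/-- Objective `½𝒬(X,U) + ℒ(X,U)` of the quadratic program (QP); here
`y₄` lists the blocks `y_{41}, …, y_{4,N-1}, y_5` (i.e. `y_{4N} = y_5`). -/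
def qpObjective (n m N : ℕ)
    (f : (Fin n → ℝ) → (Fin m → ℝ) → Fin n → ℝ) (C : (Fin n → ℝ) → ℝ)
    (xs : ℝ → Fin n → ℝ) (us : ℝ → Fin m → ℝ) (lams : ℝ → Fin n → ℝ)
    (τ ω : Fin N → ℝ)
    (y3 : Fin n → ℝ) (y4 : Fin N → Fin n → ℝ) (y6 : Fin N → Fin m → ℝ)
    (X : Fin (N + 1) → Fin n → ℝ) (U : Fin N → Fin m → ℝ) : ℝ :=
  (1 / 2) * ((∑ k, ∑ l, X (Fin.last N) k * hessC C (xs 1) k l * X (Fin.last N) l) +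
      ∑ i : Fin N, ω i *
        ((∑ k, ∑ l, X i.succ k *
            hessXX f (xs (τ i)) (us (τ i)) (lams (τ i)) k l * X i.succ l) +
         2 * (∑ k, ∑ l, X i.succ k *
            hessXU f (xs (τ i)) (us (τ i)) (lams (τ i)) k l * U i l) +
         ∑ k, ∑ l, U i k *
            hessUU f (xs (τ i)) (us (τ i)) (lams (τ i)) k l * U i l)) +
    ((∑ k, X 0 k * (y3 k + ∑ i : Fin N, ω i * y4 i k)) -
      ∑ i : Fin N, ω i * ((∑ k, y4 i k * X i.succ k) + ∑ l, y6 i l * U i l))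

/-!
With zero control, the collocated dynamics shifted by the initial value become a block system
`D_{1:N} Z = A Z + b`; since `‖D_{1:N}⁻¹‖_∞ ‖A‖_∞ ≤ 1/2` by (P1) and (A3), it has a solution with
`‖Z‖_∞ ≤ 4 ‖b‖_∞`. Comparing the optimal `(X, U)` with this feasible competitor, coercivity (A2)
of the quadratic form and Young's inequality for the linear terms give
`‖X‖_ω² + ‖U‖_ω² = O(‖y‖_∞²)`. The constant does not depend on `N` because the weights sum to `2`
and the Hessians are bounded along the compact trajectory.
-/

open Finset

lemma abs_sum_le_card_mul {ι : Type*} [Fintype ι] {s : ι → ℝ} {c : ℝ}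
    (h : ∀ k, |s k| ≤ c) : |∑ k, s k| ≤ Fintype.card ι * c := by
  calc |∑ k, s k| ≤ ∑ k, |s k| := abs_sum_le_sum_abs _ _
    _ ≤ ∑ _k : ι, c := sum_le_sum fun k _ => h k
    _ = Fintype.card ι * c := by simp

lemma abs_sum_mul_le_card_mul {ι : Type*} [Fintype ι] {v w : ι → ℝ} {a b : ℝ}
    (hv : ∀ k, |v k| ≤ a) (hw : ∀ k, |w k| ≤ b) :
    |∑ k, v k * w k| ≤ Fintype.card ι * (a * b) :=
  abs_sum_le_card_mul fun k => by
    rw [abs_mul]; exact mul_le_mul (hv k) (hw k) (abs_nonneg _) ((abs_nonneg _).trans (hv k))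

lemma abs_sum_sum_mul_mul_le {ι κ : Type*} [Fintype ι] [Fintype κ] {v : ι → ℝ}
    {M : ι → κ → ℝ} {w : κ → ℝ} {a μ b : ℝ}
    (hv : ∀ k, |v k| ≤ a) (hM : ∀ k l, |M k l| ≤ μ) (hw : ∀ l, |w l| ≤ b) :
    |∑ k, ∑ l, v k * M k l * w l| ≤ Fintype.card ι * (Fintype.card κ * (a * μ * b)) :=
  abs_sum_le_card_mul fun k => abs_sum_mul_le_card_mul (fun l => by
    rw [abs_mul]; exact mul_le_mul (hv k) (hM k l) (abs_nonneg _) ((abs_nonneg _).trans (hv k)))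
    hw

lemma abs_sum_mul_le_young {ι : Type*} [Fintype ι] {v w : ι → ℝ} {a δ : ℝ} (hδ : 0 < δ)
    (hv : ∀ k, |v k| ≤ a) :
    |∑ k, v k * w k| ≤ Fintype.card ι * (a ^ 2 / δ) + δ / 4 * ∑ k, w k ^ 2 := by
  calc |∑ k, v k * w k| ≤ ∑ k, (a ^ 2 / δ + δ / 4 * w k ^ 2) := by
        refine (abs_sum_le_sum_abs _ _).trans (sum_le_sum fun k _ => ?_)
        have hvw : |v k * w k| ≤ a * |w k| := by
          rw [abs_mul]; exact mul_le_mul_of_nonneg_right (hv k) (abs_nonneg _)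
        have hsq : a * |w k| ≤ a ^ 2 / δ + δ / 4 * w k ^ 2 := by
          rw [← sq_abs (w k), div_add' _ _ _ hδ.ne', le_div_iff₀ hδ]
          nlinarith [sq_nonneg (a - δ / 2 * |w k|)]
        exact hvw.trans hsq
    _ = Fintype.card ι * (a ^ 2 / δ) + δ / 4 * ∑ k, w k ^ 2 := by
        rw [sum_add_distrib, mul_sum]; simp

lemma abs_le_enorm' {k : ℕ} (v : Fin k → ℝ) (i : Fin k) : |v i| ≤ enorm' v := by
  rw [← Real.sqrt_sq_eq_abs]
  exact Real.sqrt_le_sqrt (single_le_sum (f := fun j => v j ^ 2)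
    (fun j _ => sq_nonneg _) (mem_univ i))

lemma abs_le_iSup_enorm' {ι : Type*} [Finite ι] {k : ℕ} (v : ι → Fin k → ℝ) (i : ι)
    (l : Fin k) : |v i l| ≤ ⨆ i, enorm' (v i) :=
  (abs_le_enorm' _ l).trans
    (le_ciSup (f := fun i => enorm' (v i)) (Set.finite_range _).bddAbove i)

lemma abs_le_norm_pi_pi {ι κ : Type*} [Fintype ι] [Fintype κ] (M : ι → κ → ℝ) (k : ι)
    (l : κ) : |M k l| ≤ ‖M‖ :=
  (norm_le_pi_norm (M k) l).trans (norm_le_pi_norm M k)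

lemma abs_mulVec_le {ι κ : Type*} [Fintype κ] {M : Matrix ι κ ℝ} {x : κ → ℝ} {b β : ℝ}
    {k : ι} (hM : ∑ l, |M k l| ≤ b) (hβ : 0 ≤ β) (hx : ∀ l, |x l| ≤ β) :
    |(M *ᵥ x) k| ≤ b * β :=
  calc |(M *ᵥ x) k| ≤ ∑ l, |M k l| * β := by
        refine (abs_sum_le_sum_abs _ _).trans (sum_le_sum fun l _ => ?_)
        rw [abs_mul]; exact mul_le_mul_of_nonneg_left (hx l) (abs_nonneg _)
    _ ≤ b * β := by rw [← sum_mul]; exact mul_le_mul_of_nonneg_right hM hβ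

section BlockSystem

variable {N n : ℕ} {Dm : Matrix (Fin N) (Fin N) ℝ} {A : Fin N → Matrix (Fin n) (Fin n) ℝ}
  {a b : ℝ}

/-- At the largest entry of `Z`, the identity `Z = Dm⁻¹ (A Z + g)` read in the sup norm gives
`‖Z‖ ≤ ‖Dm⁻¹‖ (‖A‖ ‖Z‖ + ‖g‖)`. -/
lemma abs_le_of_block_system (hD : IsUnit Dm) (hDinv : ∀ i, ∑ j, |Dm⁻¹ i j| ≤ a)
    (hA : ∀ i k, ∑ l, |A i k l| ≤ b) {g Z : Fin N → Fin n → ℝ} {β : ℝ}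
    (hg : ∀ i k, |g i k| ≤ β) (hZ : ∀ i, ∑ j, Dm i j • Z j = A i *ᵥ Z i + g i)
    (i : Fin N) (k : Fin n) : (1 - a * b) * |Z i k| ≤ a * β := by
  obtain ⟨p, -, hp⟩ := exists_max_image univ (fun p : Fin N × Fin n => |Z p.1 p.2|)
    ⟨(i, k), mem_univ _⟩
  set s := |Z p.1 p.2|
  have hs : ∀ i k, |Z i k| ≤ s := fun i k => hp (i, k) (mem_univ _)
  have ha : 0 ≤ a := (sum_nonneg fun j _ => abs_nonneg _).trans (hDinv i)
  have hb : 0 ≤ b := (sum_nonneg fun l _ => abs_nonneg _).trans (hA i k)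
  have hβ : 0 ≤ β := (abs_nonneg _).trans (hg i k)
  have hrhs : ∀ j, |(A j *ᵥ Z j + g j) p.2| ≤ b * s + β := fun j =>
    (abs_add_le _ _).trans
      (add_le_add (abs_mulVec_le (hA j p.2) (abs_nonneg _) (hs j)) (hg j p.2))
  have hcol : (fun j => Z j p.2) = Dm⁻¹ *ᵥ fun j => (A j *ᵥ Z j + g j) p.2 := by
    have hDZ : Dm *ᵥ (fun j => Z j p.2) = fun j => (A j *ᵥ Z j + g j) p.2 := by
      funext j
      simpa [Matrix.mulVec, dotProduct, Finset.sum_apply] using congrFun (hZ j) p.2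
    rw [← hDZ, Matrix.mulVec_mulVec,
      Matrix.nonsing_inv_mul _ ((Matrix.isUnit_iff_isUnit_det _).1 hD), Matrix.one_mulVec]
  have hsa : s ≤ a * (b * s + β) := by
    calc s = |(Dm⁻¹ *ᵥ fun j => (A j *ᵥ Z j + g j) p.2) p.1| := by rw [← hcol]
      _ ≤ ∑ j, |Dm⁻¹ p.1 j| * (b * s + β) := by
          simp only [Matrix.mulVec, dotProduct]
          refine (abs_sum_le_sum_abs _ _).trans (sum_le_sum fun j _ => ?_)
          rw [abs_mul]; exact mul_le_mul_of_nonneg_left (hrhs j) (abs_nonneg _)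
      _ ≤ a * (b * s + β) := by
          rw [← sum_mul]
          exact mul_le_mul_of_nonneg_right (hDinv p.1) (by positivity)
  rcases le_total 0 (1 - a * b) with hab | hab
  · nlinarith [hs i k]
  · nlinarith [abs_nonneg (Z i k)]

def blockSystemMap (Dm : Matrix (Fin N) (Fin N) ℝ) (A : Fin N → Matrix (Fin n) (Fin n) ℝ) :
    (Fin N → Fin n → ℝ) →ₗ[ℝ] (Fin N → Fin n → ℝ) :=
  LinearMap.pi fun i => (∑ j, Dm i j • LinearMap.proj j) - (A i).mulVecLin ∘ₗ LinearMap.proj i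

lemma blockSystemMap_apply (Z : Fin N → Fin n → ℝ) (i : Fin N) :
    blockSystemMap Dm A Z i = ∑ j, Dm i j • Z j - A i *ᵥ Z i := by
  simp [blockSystemMap]

/-- For `‖Dm⁻¹‖ ‖A‖ < 1` the a priori bound with `g = 0` makes the block operator injective, hence
surjective. -/
lemma exists_block_system_solution (hD : IsUnit Dm) (hDinv : ∀ i, ∑ j, |Dm⁻¹ i j| ≤ a)
    (hA : ∀ i k, ∑ l, |A i k l| ≤ b) (hab : a * b < 1) (g : Fin N → Fin n → ℝ) :
    ∃ Z : Fin N → Fin n → ℝ, ∀ i, ∑ j, Dm i j • Z j = A i *ᵥ Z i + g i := by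
  have hinj : Function.Injective (blockSystemMap Dm A) := by
    rw [← LinearMap.ker_eq_bot, LinearMap.ker_eq_bot']
    intro Z hZ
    have hsys : ∀ i, ∑ j, Dm i j • Z j = A i *ᵥ Z i + (0 : Fin N → Fin n → ℝ) i := fun i => by
      simpa [blockSystemMap_apply, sub_eq_zero] using congrFun hZ i
    funext i k
    have := abs_le_of_block_system hD hDinv hA (β := 0) (fun _ _ => by simp) hsys i k
    simp only [mul_zero] at this
    simpa using nonpos_of_mul_nonpos_right this (by linarith)
  obtain ⟨Z, hZ⟩ := LinearMap.injective_iff_surjective.mp hinj g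
  exact ⟨Z, fun i => by rw [← hZ, blockSystemMap_apply]; abel⟩

end BlockSystem

/-- The constants are reproduced exactly by the interpolant, so each row of the differentiation
matrix sums to zero. -/
lemma diffMat_row_sum_eq_zero {N : ℕ} {σ : Fin (N + 1) → ℝ} (hσ : Function.Injective σ)
    (i : Fin N) : ∑ j, diffMat N σ i j = 0 := by
  simp only [diffMat]
  rw [← Polynomial.eval_finsetSum, ← map_sum,
    Lagrange.sum_basis (Set.injOn_of_injective hσ) ⟨0, Finset.mem_univ 0⟩]
  simp

/-- Shifting by the initial value turns the collocated dynamics into a block system for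
`X₁, …, X_N` with matrix `D_{1:N}`, because the rows of `D` sum to zero. -/
lemma exists_collocation_solution {N n : ℕ} {D : Matrix (Fin N) (Fin (N + 1)) ℝ}
    (hrow : ∀ i, ∑ j, D i j = 0) (hD : IsUnit (D.submatrix id Fin.succ)) {a b : ℝ}
    (hDinv : ∀ i, ∑ j, |(D.submatrix id Fin.succ)⁻¹ i j| ≤ a)
    {A : Fin N → Matrix (Fin n) (Fin n) ℝ} (hA : ∀ i k, ∑ l, |A i k l| ≤ b)
    (ha : 0 ≤ a) (hb : 0 ≤ b) (hab : a * b < 1) {x₀ : Fin n → ℝ} {g : Fin N → Fin n → ℝ}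
    {β : ℝ} (hβ : 0 ≤ β) (hx₀ : ∀ k, |x₀ k| ≤ β) (hg : ∀ i k, |g i k| ≤ β) :
    ∃ X : Fin (N + 1) → Fin n → ℝ, X 0 = x₀ ∧
      (∀ i, ∑ j, D i j • X j = A i *ᵥ X i.succ + g i) ∧
      ∀ j k, (1 - a * b) * |X j k| ≤ (a + 1) * β := by
  obtain ⟨Z, hZ⟩ := exists_block_system_solution hD hDinv hA hab fun i => A i *ᵥ x₀ + g i
  have hZb : ∀ i k, (1 - a * b) * |Z i k| ≤ a * ((b + 1) * β) :=
    abs_le_of_block_system hD hDinv hA (fun i k => by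
      have := abs_mulVec_le (hA i k) hβ hx₀
      exact (abs_add_le _ _).trans (by linarith [hg i k])) hZ
  refine ⟨Fin.cons x₀ fun i => Z i + x₀, rfl, fun i => ?_, fun j k => ?_⟩
  · have hrow' : D i 0 + ∑ j : Fin N, D i j.succ = 0 := by rw [← Fin.sum_univ_succ, hrow i]
    rw [Fin.sum_univ_succ]
    simp only [Fin.cons_zero, Fin.cons_succ, smul_add, sum_add_distrib, ← sum_smul]
    have hZi : ∑ j, D i j.succ • Z j = A i *ᵥ Z i + (A i *ᵥ x₀ + g i) := hZ i
    have hconst : D i 0 • x₀ + (∑ j : Fin N, D i j.succ) • x₀ = 0 := by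
      rw [← add_smul, hrow', zero_smul]
    rw [hZi, Matrix.mulVec_add]
    linear_combination hconst
  · cases j using Fin.cases with
    | zero =>
      rw [Fin.cons_zero]
      nlinarith [hx₀ k, abs_nonneg (x₀ k), mul_nonneg ha hb]
    | succ i =>
      simp only [Fin.cons_succ, Pi.add_apply]
      nlinarith [hZb i k, hx₀ k, abs_add_le (Z i k) (x₀ k)]

section Hessian

variable {n m : ℕ}

def partialFst (g : (Fin n → ℝ) × (Fin m → ℝ) → ℝ) (l : Fin n)
    (q : (Fin n → ℝ) × (Fin m → ℝ)) : ℝ :=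
  fderiv ℝ g q (Pi.single l 1, 0)

lemma pgrad_comp_prodMk_left {g : (Fin n → ℝ) × (Fin m → ℝ) → ℝ} {x : Fin n → ℝ}
    {u : Fin m → ℝ} (hg : DifferentiableAt ℝ g (x, u)) (l : Fin n) :
    pgrad (fun x' => g (x', u)) x l = partialFst g l (x, u) := by
  have h : HasFDerivAt (fun x' => g (x', u)) _ x :=
    hg.hasFDerivAt.comp x (hasFDerivAt_prodMk_left x u)
  rw [pgrad, h.fderiv]
  rfl

lemma partialFst_sum {ι : Type*} [Fintype ι] {g : ι → (Fin n → ℝ) × (Fin m → ℝ) → ℝ}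
    {q : (Fin n → ℝ) × (Fin m → ℝ)} (hg : ∀ j, DifferentiableAt ℝ (g j) q) (c : ι → ℝ)
    (l : Fin n) :
    partialFst (fun p => ∑ j, c j * g j p) l q = ∑ j, c j * partialFst (g j) l q := by
  simp [partialFst, fderiv_fun_sum fun j _ => (hg j).const_mul (c j), fderiv_const_mul (hg _)]

lemma ContDiffOn.partialFst {g : (Fin n → ℝ) × (Fin m → ℝ) → ℝ}
    {Ω : Set ((Fin n → ℝ) × (Fin m → ℝ))} {k : ℕ} (hg : ContDiffOn ℝ (k + 1) g Ω)
    (hΩ : IsOpen Ω) (l : Fin n) : ContDiffOn ℝ k (partialFst g l) Ω :=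
  (hg.fderiv_of_isOpen hΩ le_rfl).clm_apply contDiffOn_const

variable {f : (Fin n → ℝ) → (Fin m → ℝ) → Fin n → ℝ} {Ω : Set ((Fin n → ℝ) × (Fin m → ℝ))}

lemma gradxH_eq_sum (hΩ : IsOpen Ω)
    (hf : ContDiffOn ℝ 2 (fun p : (Fin n → ℝ) × (Fin m → ℝ) => f p.1 p.2) Ω)
    {x : Fin n → ℝ} {u : Fin m → ℝ} (hq : (x, u) ∈ Ω) (lam : Fin n → ℝ) (l : Fin n) :
    gradxH f x u lam l = ∑ j, lam j * partialFst (fun p => f p.1 p.2 j) l (x, u) := by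
  have hdiff : ∀ j, DifferentiableAt ℝ (fun p : (Fin n → ℝ) × (Fin m → ℝ) => f p.1 p.2 j)
      (x, u) := fun j =>
    ((contDiffOn_pi.1 hf j).differentiableOn two_ne_zero).differentiableAt (hΩ.mem_nhds hq)
  rw [← partialFst_sum hdiff, ← pgrad_comp_prodMk_left (DifferentiableAt.fun_sum fun j _ =>
    (hdiff j).const_mul _)]
  rfl

lemma hessXX_eq_sum (hΩ : IsOpen Ω)
    (hf : ContDiffOn ℝ 2 (fun p : (Fin n → ℝ) × (Fin m → ℝ) => f p.1 p.2) Ω)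
    {x : Fin n → ℝ} {u : Fin m → ℝ} (hq : (x, u) ∈ Ω) (lam : Fin n → ℝ) (k l : Fin n) :
    hessXX f x u lam k l =
      ∑ j, lam j * partialFst (partialFst (fun p => f p.1 p.2 j) l) k (x, u) := by
  have hdiff : ∀ j, DifferentiableAt ℝ (partialFst (fun p => f p.1 p.2 j) l) (x, u) :=
    fun j => (((contDiffOn_pi.1 hf j).partialFst (k := 1) hΩ l).differentiableOn
      one_ne_zero).differentiableAt (hΩ.mem_nhds hq)
  have hnear : (fun x' => gradxH f x' u lam l) =ᶠ[nhds x]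
      fun x' => ∑ j, lam j * partialFst (fun p => f p.1 p.2 j) l (x', u) := by
    filter_upwards [(hΩ.preimage (continuous_id.prodMk continuous_const)).mem_nhds hq]
      with x' hx' using gradxH_eq_sum hΩ hf hx' lam l
  rw [← partialFst_sum hdiff, ← pgrad_comp_prodMk_left (DifferentiableAt.fun_sum fun j _ =>
    (hdiff j).const_mul _), pgrad, ← hnear.fderiv_eq]
  rfl

/-- `∇_{xx}H` is continuous in `(x, u, λ)` where `f` is `C²`, hence bounded along a continuous
trajectory over a compact time set. -/
lemma exists_abs_hessXX_le {s : Set ℝ} (hs : IsCompact s) (hΩ : IsOpen Ω)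
    (hf : ContDiffOn ℝ 2 (fun p : (Fin n → ℝ) × (Fin m → ℝ) => f p.1 p.2) Ω)
    {xs : ℝ → Fin n → ℝ} {us : ℝ → Fin m → ℝ} {lams : ℝ → Fin n → ℝ}
    (hmem : ∀ t ∈ s, (xs t, us t) ∈ Ω) (hxs : ContinuousOn xs s) (hus : ContinuousOn us s)
    (hlams : ContinuousOn lams s) :
    ∃ M, ∀ t ∈ s, ∀ k l, |hessXX f (xs t) (us t) (lams t) k l| ≤ M := by
  set F : ℝ → Fin n → Fin n → ℝ := fun t k l =>
    ∑ j, lams t j * partialFst (partialFst (fun p => f p.1 p.2 j) l) k (xs t, us t)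
  have hF : ContinuousOn F s := by
    refine continuousOn_pi.2 fun k => continuousOn_pi.2 fun l => ?_
    refine continuousOn_finsetSum _ fun j _ =>
      ((continuous_apply j).comp_continuousOn hlams).mul ?_
    exact (((contDiffOn_pi.1 hf j).partialFst (k := 1) hΩ l).partialFst (k := 0) hΩ
      k).continuousOn.comp (hxs.prodMk hus) hmem
  obtain ⟨M, hM⟩ := hs.exists_bound_of_continuousOn hF
  refine ⟨M, fun t ht k l => ?_⟩
  rw [hessXX_eq_sum hΩ hf (hmem t ht)]
  exact (abs_le_norm_pi_pi (F t) k l).trans (hM t ht)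

end Hessian

lemma IsRadauRule.sum_weights {N : ℕ} {τ ω : Fin N → ℝ} (h : IsRadauRule N τ ω) :
    ∑ i, ω i = 2 := by
  have h1 := h.2.2.2.2.2 1 (by rw [Polynomial.degree_one]; exact_mod_cast Nat.zero_le _)
  simp only [Polynomial.eval_one, mul_one, intervalIntegral.integral_const, smul_eq_mul] at h1
  rw [← h1]; norm_num

lemma IsRadauRule.weight_nonneg {N : ℕ} {τ ω : Fin N → ℝ} (h : IsRadauRule N τ ω) (i : Fin N) :
    0 ≤ ω i :=
  (h.2.2.2.2.1 i).le

lemma IsRadauRule.mem_Icc {N : ℕ} {τ ω : Fin N → ℝ} (h : IsRadauRule N τ ω) (i : Fin N) :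
    τ i ∈ Set.Icc (-1) 1 :=
  ⟨(h.2.1 i).le, h.2.2.1 i⟩

lemma IsRadauRule.injective_cons {N : ℕ} {τ ω : Fin N → ℝ} (h : IsRadauRule N τ ω) :
    Function.Injective (Fin.cons (-1) τ : Fin (N + 1) → ℝ) :=
  Fin.cons_injective_iff.2 ⟨fun ⟨i, hi⟩ => (h.2.1 i).ne' hi, h.1.injective⟩

lemma sqrt_le_sqrt_mul_of_le_mul_sq {a c Y : ℝ} (h : a ≤ c * Y ^ 2) (hY : 0 ≤ Y) :
    Real.sqrt a ≤ Real.sqrt c * Y := by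
  rw [← Real.sqrt_sq hY, ← Real.sqrt_mul' _ (sq_nonneg Y)]
  exact Real.sqrt_le_sqrt h

lemma abs_le_max_enorm' {N n m : ℕ} (y1 : Fin N → Fin n → ℝ) (y2 y3 : Fin n → ℝ)
    (y4 : Fin N → Fin n → ℝ) (y6 : Fin N → Fin m → ℝ) :
    let Y := max (⨆ i, enorm' (y1 i)) (max (enorm' y2) (max (enorm' y3)
      (max (⨆ i, enorm' (y4 i)) (⨆ i, enorm' (y6 i)))))
    0 ≤ Y ∧ (∀ i k, |y1 i k| ≤ Y) ∧ (∀ k, |y2 k| ≤ Y) ∧ (∀ i k, |y4 i k| ≤ Y) ∧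
      ∀ i l, |y6 i l| ≤ Y := by
  intro Y
  have hy2 : enorm' y2 ≤ Y := le_max_of_le_right (le_max_left _ _)
  exact ⟨(Real.sqrt_nonneg _).trans hy2,
    fun i k => (abs_le_iSup_enorm' y1 i k).trans (le_max_left _ _),
    fun k => (abs_le_enorm' y2 k).trans hy2,
    fun i k => (abs_le_iSup_enorm' y4 i k).trans
      (le_max_of_le_right (le_max_of_le_right (le_max_of_le_right (le_max_left _ _)))),
    fun i l => (abs_le_iSup_enorm' y6 i l).trans
      (le_max_of_le_right (le_max_of_le_right (le_max_of_le_right (le_max_right _ _))))⟩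

section QuadraticProgram

variable {n m N : ℕ} {f : (Fin n → ℝ) → (Fin m → ℝ) → Fin n → ℝ} {C : (Fin n → ℝ) → ℝ}
  {xs : ℝ → Fin n → ℝ} {us : ℝ → Fin m → ℝ} {lams : ℝ → Fin n → ℝ} {τ ω : Fin N → ℝ}
  {y4 : Fin N → Fin n → ℝ} {y6 : Fin N → Fin m → ℝ}

variable (f C xs us lams τ ω) in
def qpQuad (X : Fin (N + 1) → Fin n → ℝ) (U : Fin N → Fin m → ℝ) : ℝ :=
  (∑ k, ∑ l, X (Fin.last N) k * hessC C (xs 1) k l * X (Fin.last N) l) +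
    ∑ i : Fin N, ω i *
      ((∑ k, ∑ l, X i.succ k * hessXX f (xs (τ i)) (us (τ i)) (lams (τ i)) k l * X i.succ l) +
        2 * (∑ k, ∑ l, X i.succ k * hessXU f (xs (τ i)) (us (τ i)) (lams (τ i)) k l * U i l) +
        ∑ k, ∑ l, U i k * hessUU f (xs (τ i)) (us (τ i)) (lams (τ i)) k l * U i l)

variable (ω y4 y6) in
/-- The part of `ℒ(X, U)` that does not involve `X₀`, with the sign reversed. -/
def qpLoad (X : Fin (N + 1) → Fin n → ℝ) (U : Fin N → Fin m → ℝ) : ℝ :=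
  ∑ i : Fin N, ω i * ((∑ k, y4 i k * X i.succ k) + ∑ l, y6 i l * U i l)

/-- Two feasible points share `X₀ = y₂`, so comparing objectives cancels the `X₀`-term. -/
lemma qpQuad_sub_qpLoad_le_of_qpObjective_le {y1 : Fin N → Fin n → ℝ} {y2 y3 : Fin n → ℝ}
    {X X' : Fin (N + 1) → Fin n → ℝ} {U U' : Fin N → Fin m → ℝ}
    (hX : qpFeasible n m N f xs us τ y1 y2 X U)
    (hX' : qpFeasible n m N f xs us τ y1 y2 X' U')
    (hopt : qpObjective n m N f C xs us lams τ ω y3 y4 y6 X U ≤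
      qpObjective n m N f C xs us lams τ ω y3 y4 y6 X' U') :
    1 / 2 * qpQuad f C xs us lams τ ω X U - qpLoad ω y4 y6 X U ≤
      1 / 2 * qpQuad f C xs us lams τ ω X' U' - qpLoad ω y4 y6 X' U' := by
  simp only [qpObjective, hX.2, hX'.2] at hopt
  unfold qpQuad qpLoad
  linarith

lemma weighted_sq_le_qpQuad {α : ℝ} (hω : ∀ i, 0 ≤ ω i)
    (hT : ∀ v : Fin n → ℝ, v ≠ 0 →
      α * (∑ k, v k ^ 2) < ∑ k, ∑ l, v k * hessC C (xs 1) k l * v l)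
    (hH : ∀ i (v : Fin n → ℝ) (w : Fin m → ℝ), (v, w) ≠ 0 →
      α * ((∑ k, v k ^ 2) + ∑ l, w l ^ 2) <
        (∑ k, ∑ l, v k * hessXX f (xs (τ i)) (us (τ i)) (lams (τ i)) k l * v l) +
        2 * (∑ k, ∑ l, v k * hessXU f (xs (τ i)) (us (τ i)) (lams (τ i)) k l * w l) +
        ∑ k, ∑ l, w k * hessUU f (xs (τ i)) (us (τ i)) (lams (τ i)) k l * w l)
    (X : Fin (N + 1) → Fin n → ℝ) (U : Fin N → Fin m → ℝ) :
    α * ((∑ k, X (Fin.last N) k ^ 2) + (∑ i, ω i * ∑ k, X i.succ k ^ 2) +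
      ∑ i, ω i * ∑ l, U i l ^ 2) ≤ qpQuad f C xs us lams τ ω X U := by
  have hTX : α * ∑ k, X (Fin.last N) k ^ 2 ≤
      ∑ k, ∑ l, X (Fin.last N) k * hessC C (xs 1) k l * X (Fin.last N) l := by
    rcases eq_or_ne (X (Fin.last N)) 0 with h0 | h0
    · simp [h0]
    · exact (hT _ h0).le
  have hHX : ∀ i, ω i * (α * ((∑ k, X i.succ k ^ 2) + ∑ l, U i l ^ 2)) ≤ ω i *
      ((∑ k, ∑ l, X i.succ k * hessXX f (xs (τ i)) (us (τ i)) (lams (τ i)) k l * X i.succ l) +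
        2 * (∑ k, ∑ l, X i.succ k * hessXU f (xs (τ i)) (us (τ i)) (lams (τ i)) k l * U i l) +
        ∑ k, ∑ l, U i k * hessUU f (xs (τ i)) (us (τ i)) (lams (τ i)) k l * U i l) := by
    intro i
    refine mul_le_mul_of_nonneg_left ?_ (hω i)
    rcases eq_or_ne (X i.succ, U i) 0 with h0 | h0
    · simp [(Prod.mk_eq_zero.1 h0).1, (Prod.mk_eq_zero.1 h0).2]
    · exact (hH i _ _ h0).le
  have hsum := sum_le_sum fun i (_ : i ∈ Finset.univ) => hHX i
  have hsplit : ∑ i, ω i * (α * ((∑ k, X i.succ k ^ 2) + ∑ l, U i l ^ 2)) =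
      α * (∑ i, ω i * ∑ k, X i.succ k ^ 2) + α * ∑ i, ω i * ∑ l, U i l ^ 2 := by
    rw [mul_sum, mul_sum, ← sum_add_distrib]
    exact sum_congr rfl fun i _ => by ring
  unfold qpQuad
  linarith

lemma qpQuad_zero_le {MT MQ β : ℝ} (hω : ∀ i, 0 ≤ ω i)
    (hMT : ∀ k l, |hessC C (xs 1) k l| ≤ MT)
    (hMQ : ∀ i k l, |hessXX f (xs (τ i)) (us (τ i)) (lams (τ i)) k l| ≤ MQ)
    {X : Fin (N + 1) → Fin n → ℝ} (hX : ∀ j k, |X j k| ≤ β) :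
    qpQuad f C xs us lams τ ω X 0 ≤
      n * (n * (β * MT * β)) + (∑ i, ω i) * (n * (n * (β * MQ * β))) := by
  have hT := abs_sum_sum_mul_mul_le (hX (Fin.last N)) hMT (hX (Fin.last N))
  have hQ : ∀ i, ω i * (∑ k, ∑ l, X i.succ k * hessXX f (xs (τ i)) (us (τ i)) (lams (τ i)) k l *
      X i.succ l) ≤ ω i * (n * (n * (β * MQ * β))) := fun i =>
    mul_le_mul_of_nonneg_left (le_of_abs_le (by
      simpa using abs_sum_sum_mul_mul_le (hX i.succ) (hMQ i) (hX i.succ))) (hω i)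
  simp only [Fintype.card_fin] at hT
  simp only [qpQuad, Pi.zero_apply, mul_zero, sum_const_zero, add_zero, sum_mul]
  linarith [le_of_abs_le hT, sum_le_sum fun i (_ : i ∈ Finset.univ) => hQ i]

lemma abs_qpLoad_le {Y δ : ℝ} (hδ : 0 < δ) (hω : ∀ i, 0 ≤ ω i) (hy4 : ∀ i k, |y4 i k| ≤ Y)
    (hy6 : ∀ i l, |y6 i l| ≤ Y) (X : Fin (N + 1) → Fin n → ℝ) (U : Fin N → Fin m → ℝ) :
    |qpLoad ω y4 y6 X U| ≤ (∑ i, ω i) * ((n + m) * (Y ^ 2 / δ)) +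
      δ / 4 * ((∑ i, ω i * ∑ k, X i.succ k ^ 2) + ∑ i, ω i * ∑ l, U i l ^ 2) := by
  have hterm : ∀ i, |ω i * ((∑ k, y4 i k * X i.succ k) + ∑ l, y6 i l * U i l)| ≤
      ω i * ((n + m) * (Y ^ 2 / δ)) +
        δ / 4 * (ω i * ∑ k, X i.succ k ^ 2 + ω i * ∑ l, U i l ^ 2) := fun i => by
    have h4 := abs_sum_mul_le_young hδ (hy4 i) (w := X i.succ)
    have h6 := abs_sum_mul_le_young hδ (hy6 i) (w := U i)
    simp only [Fintype.card_fin] at h4 h6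
    rw [abs_mul, abs_of_nonneg (hω i)]
    nlinarith [mul_le_mul_of_nonneg_left ((abs_add_le _ _).trans (add_le_add h4 h6)) (hω i)]
  calc |qpLoad ω y4 y6 X U| ≤ ∑ i, |ω i * ((∑ k, y4 i k * X i.succ k) + ∑ l, y6 i l * U i l)| :=
        abs_sum_le_sum_abs _ _
    _ ≤ _ := (sum_le_sum fun i _ => hterm i).trans_eq (by
        rw [sum_add_distrib, ← sum_mul, ← mul_sum, sum_add_distrib])

lemma abs_qpLoad_zero_le {Y β : ℝ} (hω : ∀ i, 0 ≤ ω i) (hy4 : ∀ i k, |y4 i k| ≤ Y)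
    {X : Fin (N + 1) → Fin n → ℝ} (hX : ∀ j k, |X j k| ≤ β) :
    |qpLoad ω y4 y6 X 0| ≤ (∑ i, ω i) * (n * (Y * β)) := by
  calc |qpLoad ω y4 y6 X 0| ≤ ∑ i, ω i * (n * (Y * β)) := by
        refine (abs_sum_le_sum_abs _ _).trans (sum_le_sum fun i _ => ?_)
        rw [abs_mul, abs_of_nonneg (hω i)]
        refine mul_le_mul_of_nonneg_left ?_ (hω i)
        simpa using abs_sum_mul_le_card_mul (hy4 i) (hX i.succ)
    _ = (∑ i, ω i) * (n * (Y * β)) := (sum_mul _ _ _).symm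

lemma weighted_sq_le_of_qpObjective_le {α MT MQ Y β : ℝ} (hα : 0 < α) (hω : ∀ i, 0 ≤ ω i)
    (hω2 : ∑ i, ω i = 2)
    (hT : ∀ v : Fin n → ℝ, v ≠ 0 →
      α * (∑ k, v k ^ 2) < ∑ k, ∑ l, v k * hessC C (xs 1) k l * v l)
    (hH : ∀ i (v : Fin n → ℝ) (w : Fin m → ℝ), (v, w) ≠ 0 →
      α * ((∑ k, v k ^ 2) + ∑ l, w l ^ 2) <
        (∑ k, ∑ l, v k * hessXX f (xs (τ i)) (us (τ i)) (lams (τ i)) k l * v l) +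
        2 * (∑ k, ∑ l, v k * hessXU f (xs (τ i)) (us (τ i)) (lams (τ i)) k l * w l) +
        ∑ k, ∑ l, w k * hessUU f (xs (τ i)) (us (τ i)) (lams (τ i)) k l * w l)
    (hMT : ∀ k l, |hessC C (xs 1) k l| ≤ MT)
    (hMQ : ∀ i k l, |hessXX f (xs (τ i)) (us (τ i)) (lams (τ i)) k l| ≤ MQ)
    (hy4 : ∀ i k, |y4 i k| ≤ Y) (hy6 : ∀ i l, |y6 i l| ≤ Y)
    {y1 : Fin N → Fin n → ℝ} {y2 y3 : Fin n → ℝ} {X X' : Fin (N + 1) → Fin n → ℝ}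
    {U : Fin N → Fin m → ℝ} (hX : qpFeasible n m N f xs us τ y1 y2 X U)
    (hX' : qpFeasible n m N f xs us τ y1 y2 X' 0)
    (hopt : qpObjective n m N f C xs us lams τ ω y3 y4 y6 X U ≤
      qpObjective n m N f C xs us lams τ ω y3 y4 y6 X' 0)
    (hX'β : ∀ j k, |X' j k| ≤ β) :
    α / 4 * ((∑ k, X (Fin.last N) k ^ 2) + (∑ i, ω i * ∑ k, X i.succ k ^ 2) +
      ∑ i, ω i * ∑ l, U i l ^ 2) ≤
      n * (n * (β * MT * β)) / 2 + n * (n * (β * MQ * β)) + 2 * (n * (Y * β)) +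
        2 * ((n + m) * (Y ^ 2 / α)) := by
  have hcompare := qpQuad_sub_qpLoad_le_of_qpObjective_le hX hX' hopt
  have hcoercive := weighted_sq_le_qpQuad hω hT hH X U
  have hquad' := qpQuad_zero_le hω hMT hMQ hX'β
  have hload := abs_qpLoad_le hα hω hy4 hy6 X U
  have hload' := abs_qpLoad_zero_le (y6 := y6) hω hy4 hX'β
  rw [hω2] at hquad' hload hload'
  have hlast : 0 ≤ ∑ k, X (Fin.last N) k ^ 2 := sum_nonneg fun k _ => sq_nonneg _
  linarith [le_abs_self (qpLoad ω y4 y6 X U), neg_abs_le (qpLoad ω y4 y6 X' 0),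
    mul_nonneg hα.le hlast]

lemma exists_qpFeasible_zero_control
    (hσ : Function.Injective (Fin.cons (-1) τ : Fin (N + 1) → ℝ))
    (hD : IsUnit (diffMat1N N (Fin.cons (-1) τ)))
    (hDinv : ∀ i, ∑ j, |(diffMat1N N (Fin.cons (-1) τ))⁻¹ i j| ≤ 2)
    (hA : ∀ i k, ∑ l, |jacX f (xs (τ i)) (us (τ i)) k l| ≤ 1 / 4) {Y : ℝ} (hY : 0 ≤ Y)
    {y1 : Fin N → Fin n → ℝ} {y2 : Fin n → ℝ} (hy1 : ∀ i k, |y1 i k| ≤ Y)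
    (hy2 : ∀ k, |y2 k| ≤ Y) :
    ∃ X, qpFeasible n m N f xs us τ y1 y2 X 0 ∧ ∀ j k, |X j k| ≤ 6 * Y := by
  obtain ⟨X, hX0, hXdyn, hXβ⟩ := exists_collocation_solution (diffMat_row_sum_eq_zero hσ) hD
    hDinv hA (by norm_num) (by norm_num) (by norm_num) hY hy2 hy1
  exact ⟨X, ⟨fun i => by simpa using hXdyn i, hX0⟩, fun j k => by linarith [hXβ j k]⟩

lemma sqrt_weighted_sq_le {c Y : ℝ} (hω : ∀ i, 0 ≤ ω i) {X : Fin (N + 1) → Fin n → ℝ}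
    {U : Fin N → Fin m → ℝ} (hY : 0 ≤ Y)
    (h : (∑ k, X (Fin.last N) k ^ 2) + (∑ i, ω i * ∑ k, X i.succ k ^ 2) +
      ∑ i, ω i * ∑ l, U i l ^ 2 ≤ c * Y ^ 2) :
    Real.sqrt ((∑ k, X (Fin.last N) k ^ 2) + ∑ i, ω i * ∑ k, X i.succ k ^ 2) ≤
        Real.sqrt c * Y ∧
      Real.sqrt (∑ i, ω i * ∑ l, U i l ^ 2) ≤ Real.sqrt c * Y := by
  have hX : 0 ≤ (∑ k, X (Fin.last N) k ^ 2) + ∑ i, ω i * ∑ k, X i.succ k ^ 2 :=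
    add_nonneg (sum_nonneg fun k _ => sq_nonneg _)
      (sum_nonneg fun i _ => mul_nonneg (hω i) (sum_nonneg fun k _ => sq_nonneg _))
  have hU : 0 ≤ ∑ i, ω i * ∑ l, U i l ^ 2 :=
    sum_nonneg fun i _ => mul_nonneg (hω i) (sum_nonneg fun l _ => sq_nonneg _)
  exact ⟨sqrt_le_sqrt_mul_of_le_mul_sq (by linarith) hY,
    sqrt_le_sqrt_mul_of_le_mul_sq (by linarith) hY⟩

end QuadraticProgram

theorem qp_omega_norm_bound_general
    (n m : ℕ)
    (f : (Fin n → ℝ) → (Fin m → ℝ) → Fin n → ℝ) (C : (Fin n → ℝ) → ℝ)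
    (xs : ℝ → Fin n → ℝ) (us : ℝ → Fin m → ℝ) (lams : ℝ → Fin n → ℝ)
    -- smoothness of the data near the solution
    (hf : ∃ Ω : Set ((Fin n → ℝ) × (Fin m → ℝ)), IsOpen Ω ∧
      (∀ t ∈ Icc (-1:ℝ) 1, (xs t, us t) ∈ Ω) ∧
      ContDiffOn ℝ 2 (fun p : (Fin n → ℝ) × (Fin m → ℝ) => f p.1 p.2) Ω)
    -- (x*, u*) is feasible in (P)
    (hxcont : ContinuousOn xs (Icc (-1:ℝ) 1))
    (hucont : ContinuousOn us (Icc (-1:ℝ) 1))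
    -- λ* solves the costate equation
    (hcostate : ∀ t ∈ Icc (-1:ℝ) 1,
      HasDerivWithinAt lams (-(gradxH f (xs t) (us t) (lams t))) (Icc (-1:ℝ) 1) t)
    -- (A2): coercivity
    (α : ℝ) (hα : 0 < α)
    (hA2C : ∀ v : Fin n → ℝ, v ≠ 0 →
      α * (∑ k, v k ^ 2) < ∑ k, ∑ l, v k * hessC C (xs 1) k l * v l)
    (hA2H : ∀ t ∈ Icc (-1:ℝ) 1, ∀ (v : Fin n → ℝ) (w : Fin m → ℝ), (v, w) ≠ 0 →
      α * ((∑ k, v k ^ 2) + ∑ l, w l ^ 2) <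
        (∑ k, ∑ l, v k * hessXX f (xs t) (us t) (lams t) k l * v l) +
        2 * (∑ k, ∑ l, v k * hessXU f (xs t) (us t) (lams t) k l * w l) +
        ∑ k, ∑ l, w k * hessUU f (xs t) (us t) (lams t) k l * w l)
    -- (A3): Jacobian bound in the matrix sup-norm (max absolute row sum)
    (hA3 : ∀ t ∈ Icc (-1:ℝ) 1,
      (∀ k, ∑ l, |jacX f (xs t) (us t) k l| ≤ 1 / 4) ∧
      (∀ l, ∑ k, |jacX f (xs t) (us t) k l| ≤ 1 / 4))
    -- for each N ≥ 2, a Radau quadrature rule of order N satisfying (P1)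
    (τ ω : ∀ N : ℕ, Fin N → ℝ)
    (hrad : ∀ N, 2 ≤ N → IsRadauRule N (τ N) (ω N))
    (hP1 : ∀ N, 2 ≤ N → IsUnit (diffMat1N N (Fin.cons (-1) (τ N))))
    (hP1norm : ∀ N, 2 ≤ N → ∀ i : Fin N,
      ∑ j, |(diffMat1N N (Fin.cons (-1) (τ N)))⁻¹ i j| ≤ 2) :
    ∃ c : ℝ, ∀ (N : ℕ) (hN : 2 ≤ N),
      ∀ (y1 : Fin N → Fin n → ℝ) (y2 y3 : Fin n → ℝ)
        (y4 : Fin N → Fin n → ℝ) (y6 : Fin N → Fin m → ℝ)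
        (X : Fin (N + 1) → Fin n → ℝ) (U : Fin N → Fin m → ℝ),
      qpFeasible n m N f xs us (τ N) y1 y2 X U →
      (∀ (X' : Fin (N + 1) → Fin n → ℝ) (U' : Fin N → Fin m → ℝ),
        qpFeasible n m N f xs us (τ N) y1 y2 X' U' →
        qpObjective n m N f C xs us lams (τ N) (ω N) y3 y4 y6 X U ≤
          qpObjective n m N f C xs us lams (τ N) (ω N) y3 y4 y6 X' U') →
      Real.sqrt ((∑ k, X (Fin.last N) k ^ 2) +
          ∑ i : Fin N, ω N i * ∑ k, X i.succ k ^ 2) ≤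
        c * max (⨆ i, enorm' (y1 i)) (max (enorm' y2) (max (enorm' y3)
          (max (⨆ i, enorm' (y4 i)) (⨆ i, enorm' (y6 i))))) ∧
      Real.sqrt (∑ i : Fin N, ω N i * ∑ l, U i l ^ 2) ≤
        c * max (⨆ i, enorm' (y1 i)) (max (enorm' y2) (max (enorm' y3)
          (max (⨆ i, enorm' (y4 i)) (⨆ i, enorm' (y6 i))))) := by
  obtain ⟨Ω, hΩ, hmem, hfΩ⟩ := hf
  obtain ⟨MQ, hMQ⟩ := exists_abs_hessXX_le isCompact_Icc hΩ hfΩ hmem hxcont hucont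
    fun t ht => (hcostate t ht).continuousWithinAt
  set MT := ‖fun k l => hessC C (xs 1) k l‖
  set K : ℝ := n * (n * (6 * MT * 6)) / 2 + n * (n * (6 * MQ * 6)) + 2 * (n * 6) +
    2 * ((n + m) / α) with hK
  refine ⟨Real.sqrt (4 * K / α), fun N hN y1 y2 y3 y4 y6 X U hX hopt => ?_⟩
  obtain ⟨hY, hy1, hy2, hy4, hy6⟩ := abs_le_max_enorm' y1 y2 y3 y4 y6
  have hrule := hrad N hN
  obtain ⟨X', hX', hX'β⟩ := exists_qpFeasible_zero_control (m := m) hrule.injective_cons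
    (hP1 N hN) (hP1norm N hN) (fun i k => (hA3 _ (hrule.mem_Icc i)).1 k) hY hy1 hy2
  have hE := weighted_sq_le_of_qpObjective_le hα hrule.weight_nonneg hrule.sum_weights hA2C
    (fun i => hA2H _ (hrule.mem_Icc i)) (fun k l => abs_le_norm_pi_pi _ k l)
    (fun i => hMQ _ (hrule.mem_Icc i)) hy4 hy6 hX hX' (hopt X' 0 hX') hX'β
  refine sqrt_weighted_sq_le hrule.weight_nonneg hY
    (le_of_mul_le_mul_left (hE.trans_eq ?_) (by positivity : 0 < α / 4))
  rw [hK]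
  field_simp
  ring

/-- ω-norm bounds, Lemma 5.1.  Under (A2), (A3) and (P1),
there is a constant `c` independent of `N` such that for every `N` and every
right-hand side `y`, any solution `(X,U)` of the quadratic program (QP)
satisfies `‖X‖_ω ≤ c‖y‖_∞` and `‖U‖_ω ≤ c‖y‖_∞`. -/
theorem qp_omega_norm_bound
    (n m : ℕ)
    (f : (Fin n → ℝ) → (Fin m → ℝ) → Fin n → ℝ) (C : (Fin n → ℝ) → ℝ)
    (x0 : Fin n → ℝ)
    (xs : ℝ → Fin n → ℝ) (us : ℝ → Fin m → ℝ) (lams : ℝ → Fin n → ℝ)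
    -- smoothness of the data near the solution
    (hf : ∃ Ω : Set ((Fin n → ℝ) × (Fin m → ℝ)), IsOpen Ω ∧
      (∀ t ∈ Icc (-1:ℝ) 1, (xs t, us t) ∈ Ω) ∧
      ContDiffOn ℝ 2 (fun p : (Fin n → ℝ) × (Fin m → ℝ) => f p.1 p.2) Ω)
    (hC : ∃ V : Set (Fin n → ℝ), IsOpen V ∧ xs 1 ∈ V ∧ ContDiffOn ℝ 2 C V)
    -- (x*, u*) is feasible in (P)
    (hxcont : ContinuousOn xs (Icc (-1:ℝ) 1))
    (hucont : ContinuousOn us (Icc (-1:ℝ) 1))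
    (hdyn : ∀ t ∈ Icc (-1:ℝ) 1,
      HasDerivWithinAt xs (f (xs t) (us t)) (Icc (-1:ℝ) 1) t)
    (hx0 : xs (-1) = x0)
    -- (x*, u*) is a local minimizer of (P) with respect to the sup-norm
    (hmin : ∃ ε > 0, ∀ (x : ℝ → Fin n → ℝ) (u : ℝ → Fin m → ℝ),
      ContinuousOn x (Icc (-1:ℝ) 1) → ContinuousOn u (Icc (-1:ℝ) 1) →
      (∀ t ∈ Icc (-1:ℝ) 1,
        HasDerivWithinAt x (f (x t) (u t)) (Icc (-1:ℝ) 1) t) →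
      x (-1) = x0 →
      (∀ t ∈ Icc (-1:ℝ) 1,
        enorm' (x t - xs t) ≤ ε ∧ enorm' (u t - us t) ≤ ε) →
      C (xs 1) ≤ C (x 1))
    -- λ* solves the costate equation
    (hcostate : ∀ t ∈ Icc (-1:ℝ) 1,
      HasDerivWithinAt lams (-(gradxH f (xs t) (us t) (lams t))) (Icc (-1:ℝ) 1) t)
    (hlam1 : lams 1 = pgrad C (xs 1))
    -- (A2): coercivity
    (α : ℝ) (hα : 0 < α)
    (hA2C : ∀ v : Fin n → ℝ, v ≠ 0 →
      α * (∑ k, v k ^ 2) < ∑ k, ∑ l, v k * hessC C (xs 1) k l * v l)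
    (hA2H : ∀ t ∈ Icc (-1:ℝ) 1, ∀ (v : Fin n → ℝ) (w : Fin m → ℝ), (v, w) ≠ 0 →
      α * ((∑ k, v k ^ 2) + ∑ l, w l ^ 2) <
        (∑ k, ∑ l, v k * hessXX f (xs t) (us t) (lams t) k l * v l) +
        2 * (∑ k, ∑ l, v k * hessXU f (xs t) (us t) (lams t) k l * w l) +
        ∑ k, ∑ l, w k * hessUU f (xs t) (us t) (lams t) k l * w l)
    -- (A3): Jacobian bound in the matrix sup-norm (max absolute row sum)
    (hA3 : ∀ t ∈ Icc (-1:ℝ) 1,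
      (∀ k, ∑ l, |jacX f (xs t) (us t) k l| ≤ 1 / 4) ∧
      (∀ l, ∑ k, |jacX f (xs t) (us t) k l| ≤ 1 / 4))
    -- for each N ≥ 2, a Radau quadrature rule of order N satisfying (P1)
    (τ ω : ∀ N : ℕ, Fin N → ℝ)
    (hrad : ∀ N, 2 ≤ N → IsRadauRule N (τ N) (ω N))
    (hP1 : ∀ N, 2 ≤ N → IsUnit (diffMat1N N (Fin.cons (-1) (τ N))))
    (hP1norm : ∀ N, 2 ≤ N → ∀ i : Fin N,
      ∑ j, |(diffMat1N N (Fin.cons (-1) (τ N)))⁻¹ i j| ≤ 2) :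
    ∃ c : ℝ, ∀ (N : ℕ) (hN : 2 ≤ N),
      ∀ (y1 : Fin N → Fin n → ℝ) (y2 y3 : Fin n → ℝ)
        (y4 : Fin N → Fin n → ℝ) (y6 : Fin N → Fin m → ℝ)
        (X : Fin (N + 1) → Fin n → ℝ) (U : Fin N → Fin m → ℝ),
      qpFeasible n m N f xs us (τ N) y1 y2 X U →
      (∀ (X' : Fin (N + 1) → Fin n → ℝ) (U' : Fin N → Fin m → ℝ),
        qpFeasible n m N f xs us (τ N) y1 y2 X' U' →
        qpObjective n m N f C xs us lams (τ N) (ω N) y3 y4 y6 X U ≤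
          qpObjective n m N f C xs us lams (τ N) (ω N) y3 y4 y6 X' U') →
      Real.sqrt ((∑ k, X (Fin.last N) k ^ 2) +
          ∑ i : Fin N, ω N i * ∑ k, X i.succ k ^ 2) ≤
        c * max (⨆ i, enorm' (y1 i)) (max (enorm' y2) (max (enorm' y3)
          (max (⨆ i, enorm' (y4 i)) (⨆ i, enorm' (y6 i))))) ∧
      Real.sqrt (∑ i : Fin N, ω N i * ∑ l, U i l ^ 2) ≤
        c * max (⨆ i, enorm' (y1 i)) (max (enorm' y2) (max (enorm' y3)
          (max (⨆ i, enorm' (y4 i)) (⨆ i, enorm' (y6 i))))) :=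
  qp_omega_norm_bound_general n m f C xs us lams hf hxcont hucont hcostate α hα hA2C hA2H hA3 τ ω
    hrad hP1 hP1norm

end
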